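/- Let X : Ω → ℝⁿ be a random vector with mean μ ∈ ℝⁿ that is sub-Gaussian with matrix variance proxy Σ ≻ 0. Then for all τ > √n, Pr{ ‖X − μ‖_{Σ⁻¹} ≥ τ } ≤ (e/n)^{n/2} · τⁿ · exp(−τ²/2), where ‖x‖_{Σ⁻¹} := √(xᵀΣ⁻¹x). -/

import Mathlib

/-!
Whitening `Z = W (X - μ)` with `W Σ Wᵀ = 1` and `Wᵀ W = Σ⁻¹` turns `X` into an isotropic
sub-Gaussian vector with `‖Z‖² = ‖X - μ‖²_{Σ⁻¹}`. For `0 ≤ c < 1`, write `exp (c ‖z‖² / 2)` as the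
Gaussian average `E_g exp (√c ⟪z, g⟫)` over a standard Gaussian vector `g`; exchanging the two
expectations and applying the sub-Gaussian bound inside gives
`E exp (c ‖Z‖² / 2) ≤ E_g exp (c ‖g‖² / 2) = (1 - c)^{-n/2}`. Markov's inequality then bounds
`P (‖Z‖² ≥ τ²)` by `(1 - c)^{-n/2} exp (-c τ² / 2)`, and the choice `c = 1 - n / τ²` is the bound.
-/

open MeasureTheory Matrix

noncomputable section

/-- A random vector `X` with mean `μ` is sub-Gaussian with matrix variance proxy `S`
(`X ~ SG(μ, S)`): its moment generating function exists and
`E[exp(λᵀ(X − μ))] ≤ exp(λᵀ S λ / 2)` for all `λ ∈ ℝⁿ`. -/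
def IsSubGaussianMat {Ω : Type*} [MeasurableSpace Ω] {n : ℕ} (P : Measure Ω)
    (X : Ω → Fin n → ℝ) (μ : Fin n → ℝ) (S : Matrix (Fin n) (Fin n) ℝ) : Prop :=
  ∀ l : Fin n → ℝ,
    Integrable (fun ω => Real.exp (l ⬝ᵥ (X ω - μ))) P ∧
    ∫ ω, Real.exp (l ⬝ᵥ (X ω - μ)) ∂P ≤ Real.exp ((l ⬝ᵥ (S *ᵥ l)) / 2)

open ProbabilityTheory Real

theorem Matrix.PosDef.exists_mul_mul_transpose_eq_one {ι : Type*} [Fintype ι] [DecidableEq ι]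
    {S : Matrix ι ι ℝ} (hS : S.PosDef) : ∃ W : Matrix ι ι ℝ, W * S * Wᵀ = 1 ∧ Wᵀ * W = S⁻¹ := by
  open scoped MatrixOrder Matrix.Norms.L2Operator in
  obtain ⟨W, hW⟩ := CStarAlgebra.nonneg_iff_eq_star_mul_self.mp hS.inv.posSemidef.nonneg
  rw [star_eq_conjTranspose, conjTranspose_eq_transpose_of_trivial] at hW
  refine ⟨W, ?_, hW.symm⟩
  have hWinv : Wᵀ * (W * S) = 1 := by
    rw [← Matrix.mul_assoc, ← hW, nonsing_inv_mul _ (isUnit_iff_isUnit_det S |>.mp hS.isUnit)]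
  rw [mul_eq_one_comm.mp hWinv]

theorem gaussianPDFReal_zero_one_mul_exp (c x : ℝ) :
    gaussianPDFReal 0 1 x * exp (c * x ^ 2 / 2) = (√(2 * π))⁻¹ * exp (-((1 - c) / 2) * x ^ 2) := by
  rw [gaussianPDFReal, mul_assoc, ← exp_add]
  push_cast
  ring_nf

theorem integrable_exp_mul_sq_gaussianReal {c : ℝ} (hc : c < 1) :
    Integrable (fun x => exp (c * x ^ 2 / 2)) (gaussianReal 0 1) := by
  rw [gaussianReal_of_var_ne_zero _ one_ne_zero, integrable_withDensity_iff_integrable_smul'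
    (measurable_gaussianPDF _ _) (ae_of_all _ fun _ => gaussianPDF_lt_top)]
  simp only [toReal_gaussianPDF, smul_eq_mul, gaussianPDFReal_zero_one_mul_exp]
  exact (integrable_exp_neg_mul_sq (by linarith)).const_mul _

theorem integral_exp_mul_sq_gaussianReal {c : ℝ} (hc : c < 1) :
    ∫ x, exp (c * x ^ 2 / 2) ∂gaussianReal 0 1 = (√(1 - c))⁻¹ := by
  rw [integral_gaussianReal_eq_integral_smul one_ne_zero]
  simp only [smul_eq_mul, gaussianPDFReal_zero_one_mul_exp, integral_const_mul, integral_gaussian]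
  rw [show π / ((1 - c) / 2) = 2 * π / (1 - c) by field_simp, sqrt_div' _ (sub_pos.2 hc).le]
  field_simp

abbrev stdGaussianPi (ι : Type*) [Fintype ι] : Measure (ι → ℝ) :=
  Measure.pi fun _ => gaussianReal 0 1

section StdGaussianPi

variable {ι : Type*} [Fintype ι]

theorem exp_dotProduct_eq_prod (v u : ι → ℝ) : exp (v ⬝ᵥ u) = ∏ i, exp (v i * u i) := by
  rw [dotProduct, exp_sum]

theorem lintegral_exp_dotProduct_stdGaussianPi (v : ι → ℝ) :
    ∫⁻ u, ENNReal.ofReal (exp (v ⬝ᵥ u)) ∂stdGaussianPi ι = ENNReal.ofReal (exp (v ⬝ᵥ v / 2)) := by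
  have hint : Integrable (fun u : ι → ℝ => ∏ i, exp (v i * u i)) (stdGaussianPi ι) :=
    Integrable.fintype_prod fun i => integrable_exp_mul_gaussianReal (v i)
  have hmgf (t : ℝ) : ∫ x, exp (t * x) ∂gaussianReal 0 1 = exp (t ^ 2 / 2) := by
    simpa [mgf] using congrFun (mgf_id_gaussianReal (μ := 0) (v := 1)) t
  simp_rw [exp_dotProduct_eq_prod]
  rw [← ofReal_integral_eq_lintegral_ofReal hint (ae_of_all _ fun u => by positivity),
    integral_fintype_prod_eq_prod (fun i x => exp (v i * x))]
  simp_rw [hmgf, ← exp_sum, dotProduct, Finset.sum_div, sq]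

theorem lintegral_exp_mul_dotProduct_self_stdGaussianPi {c : ℝ} (hc : c < 1) :
    ∫⁻ u, ENNReal.ofReal (exp (c * (u ⬝ᵥ u) / 2)) ∂stdGaussianPi ι
      = ENNReal.ofReal ((√(1 - c))⁻¹ ^ Fintype.card ι) := by
  have hprod (u : ι → ℝ) : exp (c * (u ⬝ᵥ u) / 2) = ∏ i, exp (c * u i ^ 2 / 2) := by
    rw [← exp_sum, dotProduct, Finset.mul_sum, Finset.sum_div]
    simp_rw [sq]
  simp_rw [hprod]
  rw [← ofReal_integral_eq_lintegral_ofReal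
      (Integrable.fintype_prod fun _ => integrable_exp_mul_sq_gaussianReal hc)
      (ae_of_all _ fun u => by positivity),
    integral_fintype_prod_eq_pow (fun x => exp (c * x ^ 2 / 2)),
    integral_exp_mul_sq_gaussianReal hc]

end StdGaussianPi

namespace IsSubGaussianMat

variable {Ω : Type*} [MeasurableSpace Ω] {P : Measure Ω} {n : ℕ} {X : Ω → Fin n → ℝ}
  {μ : Fin n → ℝ} {S : Matrix (Fin n) (Fin n) ℝ}

theorem lintegral_exp_le (h : IsSubGaussianMat P X μ S) (l : Fin n → ℝ) :
    ∫⁻ ω, ENNReal.ofReal (exp (l ⬝ᵥ (X ω - μ))) ∂P ≤ ENNReal.ofReal (exp (l ⬝ᵥ (S *ᵥ l) / 2)) := by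
  rw [← ofReal_integral_eq_lintegral_ofReal (h l).1 (ae_of_all _ fun _ => (exp_pos _).le)]
  exact ENNReal.ofReal_le_ofReal (h l).2

theorem mulVec_sub {m : ℕ} (h : IsSubGaussianMat P X μ S) (A : Matrix (Fin m) (Fin n) ℝ) :
    IsSubGaussianMat P (fun ω => A *ᵥ (X ω - μ)) 0 (A * S * Aᵀ) := by
  intro l
  have hdot (x : Fin n → ℝ) : l ⬝ᵥ (A *ᵥ x - 0) = (Aᵀ *ᵥ l) ⬝ᵥ x := by
    rw [sub_zero, dotProduct_mulVec, mulVec_transpose]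
  have hquad : l ⬝ᵥ ((A * S * Aᵀ) *ᵥ l) = (Aᵀ *ᵥ l) ⬝ᵥ (S *ᵥ (Aᵀ *ᵥ l)) := by
    rw [← mulVec_mulVec, ← mulVec_mulVec, dotProduct_mulVec, mulVec_transpose]
  simp only [hdot, hquad]
  exact h (Aᵀ *ᵥ l)

variable [SFinite P] {Z : Ω → Fin n → ℝ} {c : ℝ}

theorem lintegral_exp_mul_dotProduct_self_le (hZ : Measurable Z) (h : IsSubGaussianMat P Z 0 1)
    (hc0 : 0 ≤ c) (hc1 : c < 1) :
    ∫⁻ ω, ENNReal.ofReal (exp (c * (Z ω ⬝ᵥ Z ω) / 2)) ∂P ≤ ENNReal.ofReal ((√(1 - c))⁻¹ ^ n) := by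
  have hscale (x y : Fin n → ℝ) : (√c • x) ⬝ᵥ (√c • y) = c * (x ⬝ᵥ y) := by
    rw [smul_dotProduct, dotProduct_smul, smul_smul, mul_self_sqrt hc0, smul_eq_mul]
  calc ∫⁻ ω, ENNReal.ofReal (exp (c * (Z ω ⬝ᵥ Z ω) / 2)) ∂P
      = ∫⁻ ω, ∫⁻ u, ENNReal.ofReal (exp ((√c • u) ⬝ᵥ Z ω)) ∂stdGaussianPi (Fin n) ∂P := by
        refine lintegral_congr fun ω => ?_
        simp_rw [smul_dotProduct, dotProduct_comm _ (Z ω), ← smul_dotProduct,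
          lintegral_exp_dotProduct_stdGaussianPi, hscale]
    _ = ∫⁻ u, ∫⁻ ω, ENNReal.ofReal (exp ((√c • u) ⬝ᵥ Z ω)) ∂P ∂stdGaussianPi (Fin n) :=
        lintegral_lintegral_swap (by unfold dotProduct; fun_prop)
    _ ≤ ∫⁻ u, ENNReal.ofReal (exp (c * (u ⬝ᵥ u) / 2)) ∂stdGaussianPi (Fin n) :=
        lintegral_mono fun u => by
          simpa only [sub_zero, one_mulVec, hscale] using h.lintegral_exp_le (√c • u)
    _ = ENNReal.ofReal ((√(1 - c))⁻¹ ^ n) := by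
        rw [lintegral_exp_mul_dotProduct_self_stdGaussianPi hc1, Fintype.card_fin]

theorem measure_le_dotProduct_self_le (hZ : Measurable Z) (h : IsSubGaussianMat P Z 0 1)
    (hc0 : 0 ≤ c) (hc1 : c < 1) (t : ℝ) :
    P {ω | t ≤ Z ω ⬝ᵥ Z ω} ≤ ENNReal.ofReal ((√(1 - c))⁻¹ ^ n * exp (-(c * t / 2))) := by
  let ε := ENNReal.ofReal (exp (c * t / 2))
  have hsub : {ω | t ≤ Z ω ⬝ᵥ Z ω}
      ⊆ {ω | ε ≤ ENNReal.ofReal (exp (c * (Z ω ⬝ᵥ Z ω) / 2))} := fun ω (hω : t ≤ _) =>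
    ENNReal.ofReal_le_ofReal <| exp_le_exp.2 <| by gcongr
  calc P {ω | t ≤ Z ω ⬝ᵥ Z ω}
      ≤ (∫⁻ ω, ENNReal.ofReal (exp (c * (Z ω ⬝ᵥ Z ω) / 2)) ∂P) / ε :=
        (measure_mono hsub).trans <| meas_ge_le_lintegral_div
          (by unfold dotProduct; fun_prop) (by positivity) ENNReal.ofReal_ne_top
    _ ≤ ENNReal.ofReal ((√(1 - c))⁻¹ ^ n) / ε := by
        gcongr
        exact h.lintegral_exp_mul_dotProduct_self_le hZ hc0 hc1
    _ = ENNReal.ofReal ((√(1 - c))⁻¹ ^ n * exp (-(c * t / 2))) := by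
        rw [← ENNReal.ofReal_div_of_pos (exp_pos _), Real.exp_neg, div_eq_mul_inv]

end IsSubGaussianMat

theorem inv_sqrt_div_sq_pow_mul_exp {n : ℕ} (hn : 0 < n) {τ : ℝ} (hτ : 0 < τ) :
    (√(n / τ ^ 2))⁻¹ ^ n * exp (-((1 - n / τ ^ 2) * τ ^ 2 / 2))
      = (exp 1 / n) ^ ((n : ℝ) / 2) * τ ^ n * exp (-τ ^ 2 / 2) := by
  have hn' : (0 : ℝ) < n := Nat.cast_pos.mpr hn
  have hsqrt : (√n) ^ n = (n : ℝ) ^ ((n : ℝ) / 2) := by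
    rw [sqrt_eq_rpow, ← rpow_natCast, ← rpow_mul hn'.le]
    ring_nf
  have hexp : -((1 - n / τ ^ 2) * τ ^ 2 / 2) = (n : ℝ) / 2 + -τ ^ 2 / 2 := by
    field_simp
    ring
  rw [sqrt_div' _ (sq_nonneg τ), sqrt_sq hτ.le, inv_div, div_pow, hsqrt, hexp, exp_add,
    div_rpow (exp_pos 1).le hn'.le, exp_one_rpow]
  field_simp

/-- elliptical tail bound. If `X ~ SG(μ, Σ)` with `Σ ≻ 0`, then for all
`τ > √n`, `Pr{‖X − μ‖_{Σ⁻¹} ≥ τ} ≤ (e/n)^{n/2} τⁿ exp(−τ²/2)`. -/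
theorem subGaussian_elliptical_tail {Ω : Type*} [MeasurableSpace Ω] {n : ℕ}
    (P : Measure Ω) [IsProbabilityMeasure P]
    (X : Ω → Fin n → ℝ) (hX : Measurable X) (μ : Fin n → ℝ)
    (Sig : Matrix (Fin n) (Fin n) ℝ) (hSig : Sig.PosDef)
    (hsg : IsSubGaussianMat P X μ Sig)
    (τ : ℝ) (hτ : Real.sqrt n < τ) :
    P {ω | τ ≤ Real.sqrt ((X ω - μ) ⬝ᵥ (Sig⁻¹ *ᵥ (X ω - μ)))} ≤
      ENNReal.ofReal
        ((Real.exp 1 / n) ^ ((n : ℝ) / 2) * τ ^ (n : ℕ) * Real.exp (-τ ^ 2 / 2)) := by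
  have hτ0 : 0 < τ := (sqrt_nonneg _).trans_lt hτ
  obtain ⟨W, hWSig, hWW⟩ := hSig.exists_mul_mul_transpose_eq_one
  set Z := fun ω => W *ᵥ (X ω - μ)
  have hZ : IsSubGaussianMat P Z 0 1 := hWSig ▸ hsg.mulVec_sub W
  have hZm : Measurable Z := by unfold Z mulVec dotProduct; fun_prop
  have hnorm (ω : Ω) : (X ω - μ) ⬝ᵥ (Sig⁻¹ *ᵥ (X ω - μ)) = Z ω ⬝ᵥ Z ω := by
    rw [← hWW, ← mulVec_mulVec, dotProduct_mulVec, ← mulVec_transpose, transpose_transpose]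
  simp_rw [hnorm, le_sqrt' hτ0]
  rcases n.eq_zero_or_pos with rfl | hn
  · simp [dotProduct, hτ0.ne']
  have hτn : (n : ℝ) < τ ^ 2 := (sqrt_lt' hτ0).1 hτ
  have hc0 : 0 ≤ 1 - n / τ ^ 2 := sub_nonneg.2 ((div_le_one (by positivity)).2 hτn.le)
  have hc1 : 1 - n / τ ^ 2 < 1 := sub_lt_self _ (by positivity)
  calc _ ≤ _ := hZ.measure_le_dotProduct_self_le hZm hc0 hc1 (τ ^ 2)
    _ = _ := by rw [sub_sub_cancel, inv_sqrt_div_sq_pow_mul_exp hn hτ0]
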